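/- arXiv:1606.03591 — 3 statements merged into one kernel-verified Lean document; each statement's English description precedes it below -/
import Mathlib

section
/- If A = {a(1), ..., a(N)} where a : ℕ → ℝ is a lacunary sequence satisfying a(x+1)/a(x) ≥ c > 1 for all x ≥ 1 with a(1) > 0, then E(A) ≪ N^2, i.e., there is a constant C depending only on c such that E(A) ≤ C N^2. -/
/-!
Let `r(v)` be the number of pairs of `A × A` with sum `v`, so that `E(A) = ∑ r(v)² ≤ (max r) · |A|²`.
In a pair of nonnegative reals with sum `v` the larger entry lies in `[v/2, v]`, and if `c^k > 2`
a lacunary sequence with ratio `c` has at most `k` terms in such a window. Hence `r(v) ≤ 2k` and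
`E(A) ≤ 2k N²`.
-/

/-- The additive energy of a finite set `A ⊆ ℝ`. -/
noncomputable def addEnergy (A : Finset ℝ) : ℕ :=
  ((A ×ˢ A ×ˢ A ×ˢ A).filter fun p => p.1 + p.2.1 = p.2.2.1 + p.2.2.2).card

open scoped Finset Pointwise

theorem addEnergy_eq_finsetAddEnergy (A : Finset ℝ) : addEnergy A = Finset.addEnergy A A := by
  rw [addEnergy, Finset.addEnergy_eq_card_filter]
  exact Finset.card_equiv (Equiv.prodAssoc ℝ ℝ (ℝ × ℝ)).symm (by simp [and_assoc])

namespace Finset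

open scoped Combinatorics.Additive

theorem addEnergy_le_of_card_fiber_le {α : Type*} [DecidableEq α] [Add α] {s t : Finset α}
    {M : ℕ} (h : ∀ v, #{xy ∈ s ×ˢ t | xy.1 + xy.2 = v} ≤ M) : E[s, t] ≤ M * (#s * #t) :=
  calc E[s, t] = ∑ v ∈ s + t, #{xy ∈ s ×ˢ t | xy.1 + xy.2 = v} ^ 2 := addEnergy_eq_sum_sq' s t
    _ ≤ ∑ v ∈ s + t, M * #{xy ∈ s ×ˢ t | xy.1 + xy.2 = v} :=
      sum_le_sum fun v _ => by rw [sq]; exact Nat.mul_le_mul_right _ (h v)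
    _ = M * (#s * #t) := by
      rw [← mul_sum, sum_card_fiberwise_eq_card_filter, filter_true_of_mem, card_product]
      exact fun xy hxy => add_mem_add (mem_product.1 hxy).1 (mem_product.1 hxy).2

theorem card_le_of_forall_sub_lt {S : Finset ℕ} {K : ℕ}
    (h : ∀ x ∈ S, ∀ y ∈ S, x ≤ y → y - x < K) : #S ≤ K := by
  rcases S.eq_empty_or_nonempty with rfl | hS
  · simp
  have hsub : S ⊆ Ico (S.min' hS) (S.min' hS + K) := fun y hy => by
    have hmin := S.min'_le y hy
    have := h _ (S.min'_mem hS) y hy hmin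
    rw [mem_Ico]; omega
  simpa using card_le_card hsub

variable {K : Type*} [Field K] [LinearOrder K] [IsStrictOrderedRing K]

theorem card_fiber_add_le_two_mul [DecidableEq K] {A : Finset K} (hA : ∀ x ∈ A, 0 ≤ x) (v : K) :
    #{xy ∈ A ×ˢ A | xy.1 + xy.2 = v} ≤ 2 * #{x ∈ A | v / 2 ≤ x ∧ x ≤ v} := by
  set W := {x ∈ A | v / 2 ≤ x ∧ x ≤ v}
  have hsub : {xy ∈ A ×ˢ A | xy.1 + xy.2 = v} ⊆
      W.image (fun x => (x, v - x)) ∪ W.image (fun y => (v - y, y)) := by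
    rintro ⟨x, y⟩ hxy
    simp only [mem_filter, mem_product] at hxy
    obtain ⟨⟨hx, hy⟩, rfl⟩ := hxy
    have := hA x hx
    have := hA y hy
    rcases le_total y x with hyx | hxy
    · refine mem_union_left _ (mem_image.2 ⟨x, mem_filter.2 ⟨hx, ?_, ?_⟩, by simp⟩) <;> linarith
    · refine mem_union_right _ (mem_image.2 ⟨y, mem_filter.2 ⟨hy, ?_, ?_⟩, by simp⟩) <;> linarith
  calc _ ≤ #(W.image (fun x => (x, v - x)) ∪ W.image (fun y => (v - y, y))) := card_le_card hsub
    _ ≤ #W + #W := (card_union_le _ _).trans (add_le_add card_image_le card_image_le)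
    _ = 2 * #W := (two_mul _).symm

end Finset

section Lacunary

open Finset

variable {K : Type*} [Field K] [LinearOrder K] [IsStrictOrderedRing K] {c : K} {a : ℕ → K}

theorem pow_mul_le_of_lacunary (hc : 0 ≤ c) (hg : ∀ x : ℕ, 1 ≤ x → c * a x ≤ a (x + 1))
    {x y : ℕ} (hx : 1 ≤ x) (hxy : x ≤ y) : c ^ (y - x) * a x ≤ a y := by
  induction y, hxy using Nat.le_induction with
  | base => simp
  | succ y hxy ih =>
    calc c ^ (y + 1 - x) * a x = c * (c ^ (y - x) * a x) := by
          rw [Nat.sub_add_comm hxy, pow_succ]; ring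
      _ ≤ c * a y := mul_le_mul_of_nonneg_left ih hc
      _ ≤ a (y + 1) := hg y (hx.trans hxy)

theorem pos_of_lacunary (hc : 0 < c) (h1 : 0 < a 1) (hg : ∀ x : ℕ, 1 ≤ x → c * a x ≤ a (x + 1))
    {x : ℕ} (hx : 1 ≤ x) : 0 < a x :=
  (mul_pos (pow_pos hc _) h1).trans_le (pow_mul_le_of_lacunary hc.le hg le_rfl hx)

theorem card_lacunary_mem_Icc_half_le (hc : 1 < c) (h1 : 0 < a 1)
    (hg : ∀ x : ℕ, 1 ≤ x → c * a x ≤ a (x + 1)) {k : ℕ} (hk : 2 < c ^ k) (N : ℕ) (v : K) :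
    #{x ∈ Icc 1 N | v / 2 ≤ a x ∧ a x ≤ v} ≤ k := by
  refine card_le_of_forall_sub_lt fun x hx y hy hxy => ?_
  simp only [mem_filter, mem_Icc] at hx hy
  have hax := pos_of_lacunary (zero_lt_one.trans hc) h1 hg hx.1.1
  have hgrow := pow_mul_le_of_lacunary (zero_lt_one.trans hc).le hg hx.1.1 hxy
  have : c ^ (y - x) ≤ 2 := le_of_mul_le_mul_right (by linarith) hax
  exact (pow_lt_pow_iff_right₀ hc).1 (this.trans_lt hk)

end Lacunary

theorem lacunary_energy_bound (c : ℝ) (hc : 1 < c) :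
    ∃ C : ℝ, 0 < C ∧ ∀ (a : ℕ → ℝ) (N : ℕ),
      0 < a 1 →
      (∀ x : ℕ, 1 ≤ x → c * a x ≤ a (x + 1)) →
      (addEnergy ((Finset.Icc 1 N).image a) : ℝ) ≤ C * (N : ℝ) ^ 2 := by
  obtain ⟨k, hk⟩ := pow_unbounded_of_one_lt (2 : ℝ) hc
  have hk0 : k ≠ 0 := by rintro rfl; norm_num at hk
  refine ⟨2 * k, by positivity, fun a N h1 hg => ?_⟩
  set A := (Finset.Icc 1 N).image a
  have hA_nonneg : ∀ z ∈ A, 0 ≤ z := by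
    simp only [A, Finset.mem_image, Finset.mem_Icc]
    rintro _ ⟨x, hx, rfl⟩
    exact (pos_of_lacunary (zero_lt_one.trans hc) h1 hg hx.1).le
  have hfiber (v : ℝ) : #{xy ∈ A ×ˢ A | xy.1 + xy.2 = v} ≤ 2 * k := by
    refine (Finset.card_fiber_add_le_two_mul hA_nonneg v).trans (Nat.mul_le_mul_left 2 ?_)
    rw [Finset.filter_image]
    exact Finset.card_image_le.trans (card_lacunary_mem_Icc_half_le hc h1 hg hk N v)
  have hA_card : #A ≤ N := Finset.card_image_le.trans (by simp)
  have : addEnergy A ≤ 2 * k * N ^ 2 := by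
    rw [addEnergy_eq_finsetAddEnergy, sq]
    exact (Finset.addEnergy_le_of_card_fiber_le hfiber).trans (by gcongr)
  exact_mod_cast this
end

section
/- Let s > 0, N ≥ 2 with 2s ≤ N, and let c_n (n ≠ 0) be real numbers satisfying |c_n| ≤ min(2s/N, 1/|n|). Then for all nonzero integers v, w: Σ_{n_1, n_2 ≠ 0, n_1 v = n_2 w} |c_{n_1} c_{n_2}| ≤ C(1+s)(log N)(s/N)·gcd(v,w)/√|vw|, where C is an absolute constant. -/
open Filter Finset

lemma tail_sq_bound (K : ℕ) (hK : 1 ≤ K) :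
    ∑' n : ℕ, (1:ℝ) / ((n : ℝ) + K + 1)^2 ≤ 1 / (K:ℝ) := by
  have hKR : (0:ℝ) < K := by exact_mod_cast hK
  have hsum : Summable (fun n : ℕ => (1:ℝ) / ((n : ℝ) + K + 1)^2) := by
    have := (Real.summable_one_div_nat_pow (p := 2)).mpr one_lt_two
    have h2 := (summable_nat_add_iff (f := fun n : ℕ => (1:ℝ) / (n:ℝ)^2) (K+1)).mpr this
    refine h2.congr fun n => ?_
    push_cast; ring_nf
  have htel : HasSum (fun n : ℕ => (1:ℝ)/((n:ℝ)+K) - 1/((n:ℝ)+K+1)) (1/(K:ℝ)) := by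
    have hnn : ∀ n : ℕ, 0 ≤ (1:ℝ)/((n:ℝ)+K) - 1/((n:ℝ)+K+1) := by
      intro n
      have h1 : (0:ℝ) < (n:ℝ)+K := by positivity
      have := one_div_le_one_div_of_le h1 (by linarith : (n:ℝ)+K ≤ (n:ℝ)+K+1)
      linarith
    rw [hasSum_iff_tendsto_nat_of_nonneg hnn]
    have heq : ∀ M : ℕ, ∑ i ∈ range M, ((1:ℝ)/((i:ℝ)+K) - 1/((i:ℝ)+K+1))
        = 1/(K:ℝ) - 1/((M:ℝ)+K) := by
      intro M
      have := Finset.sum_range_sub' (f := fun i : ℕ => (1:ℝ)/((i:ℝ)+K)) M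
      simp only [Nat.cast_zero, zero_add] at this
      rw [← this]
      refine Finset.sum_congr rfl fun i _ => ?_
      push_cast; ring_nf
    simp only [heq]
    have h0 : Tendsto (fun M : ℕ => 1/((M:ℝ)+K)) atTop (nhds 0) := by
      have hat : Tendsto (fun M : ℕ => ((M:ℝ)+K)) atTop atTop :=
        tendsto_atTop_add_const_right _ _ tendsto_natCast_atTop_atTop
      simpa only [one_div, Pi.inv_def] using hat.inv_tendsto_atTop
    have := (tendsto_const_nhds (x := (1:ℝ)/(K:ℝ))).sub h0
    simpa using this
  calc ∑' n : ℕ, (1:ℝ) / ((n : ℝ) + K + 1)^2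
      ≤ ∑' n : ℕ, ((1:ℝ)/((n:ℝ)+K) - 1/((n:ℝ)+K+1)) := by
        refine Summable.tsum_le_tsum (fun n => ?_) hsum htel.summable
        have h1 : (0:ℝ) < (n:ℝ)+K := by positivity
        have h2 : (0:ℝ) < (n:ℝ)+K+1 := by positivity
        rw [div_sub_div _ _ (ne_of_gt h1) (ne_of_gt h2)]
        rw [div_le_div_iff₀ (by positivity) (by positivity)]
        nlinarith
    _ = 1/(K:ℝ) := htel.tsum_eq



lemma min_sum_nat (a b : ℝ) (ha : 0 < a) (hb : 0 < b) :
    ∑' n : ℕ, min (a^2) (b^2 / ((n:ℝ)+1)^2) ≤ 3 * (a * b) := by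
  set f : ℕ → ℝ := fun n => min (a^2) (b^2 / ((n:ℝ)+1)^2) with hf
  have hfnn : ∀ n, 0 ≤ f n := by intro n; simp only [hf]; positivity
  have hfle : ∀ n : ℕ, f n ≤ b^2 * (1 / ((n:ℝ)+1)^2) := by
    intro n; rw [mul_one_div]; exact min_le_right _ _
  have hmaj : Summable (fun n : ℕ => b^2 * (1 / ((n:ℝ)+1)^2)) := by
    have := (Real.summable_one_div_nat_pow (p := 2)).mpr one_lt_two
    have h2 := (summable_nat_add_iff (f := fun n : ℕ => (1:ℝ) / (n:ℝ)^2) 1).mpr this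
    exact (h2.congr (fun n => by push_cast; ring_nf)).mul_left _
  have hsum : Summable f := Summable.of_nonneg_of_le hfnn hfle hmaj
  -- tail bound helper
  have tail : ∀ K : ℕ, 1 ≤ K → ∑' n : ℕ, f (n + K) ≤ b^2 / K := by
    intro K hK
    have h1 : ∀ n : ℕ, f (n + K) ≤ b^2 * (1 / ((n:ℝ) + K + 1)^2) := by
      intro n
      calc f (n+K) ≤ b^2 * (1 / (((n+K:ℕ):ℝ)+1)^2) := hfle _
        _ = b^2 * (1 / ((n:ℝ) + K + 1)^2) := by push_cast; ring_nf
    calc ∑' n : ℕ, f (n+K) ≤ ∑' n : ℕ, b^2 * (1 / ((n:ℝ) + K + 1)^2) := by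
          refine Summable.tsum_le_tsum h1 (hsum.comp_injective (add_left_injective K)) ?_
          have : Summable (fun n : ℕ => (1:ℝ) / ((n : ℝ) + K + 1)^2) := by
            have h2 := (summable_nat_add_iff (f := fun n : ℕ => (1:ℝ) / (n:ℝ)^2) (K+1)).mpr
              ((Real.summable_one_div_nat_pow (p := 2)).mpr one_lt_two)
            exact h2.congr fun n => by push_cast; ring_nf
          exact this.mul_left _
      _ = b^2 * ∑' n : ℕ, (1 / ((n:ℝ) + K + 1)^2) := by rw [tsum_mul_left]
      _ ≤ b^2 * (1 / K) := by
          refine mul_le_mul_of_nonneg_left (tail_sq_bound K hK) (by positivity)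
      _ = b^2 / K := by ring
  rcases lt_or_ge b a with hba | hab
  · -- b < a : all terms use b²/(n+1)², sum ≤ 2b² ≤ 2ab
    have h0 : ∑' n, f n = f 0 + ∑' n, f (n+1) := Summable.tsum_eq_zero_add hsum
    have ht : ∑' n, f (n+1) ≤ b^2 := by
      have := tail 1 le_rfl; norm_num at this; linarith
    have hf0 : f 0 ≤ b^2 := by
      have := hfle 0; norm_num at this; linarith
    have : ∑' n, f n ≤ 2 * b^2 := by rw [h0]; linarith
    nlinarith
  · -- a ≤ b
    set K : ℕ := ⌊b / a⌋₊ with hKdef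
    have hK1 : 1 ≤ K := (Nat.one_le_floor_iff _).mpr ((one_le_div ha).mpr hab)
    have hKle : (K:ℝ) ≤ b / a := Nat.floor_le (by positivity)
    have hKlt : b / a < K + 1 := Nat.lt_floor_add_one _
    have hKR : (0:ℝ) < K := by exact_mod_cast hK1
    have hsplit := (Summable.sum_add_tsum_nat_add (f := f) K hsum).symm
    have hhead : ∑ i ∈ range K, f i ≤ a * b := by
      calc ∑ i ∈ range K, f i ≤ ∑ i ∈ range K, a^2 :=
            Finset.sum_le_sum fun i _ => min_le_left _ _
        _ = K * a^2 := by rw [Finset.sum_const, card_range, nsmul_eq_mul]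
        _ ≤ (b/a) * a^2 := by nlinarith
        _ = a * b := by field_simp
    have htail : ∑' n : ℕ, f (n + K) ≤ 2 * (a * b) := by
      have h2K : b / a ≤ 2 * K := by
        have : (1:ℝ) ≤ K := by exact_mod_cast hK1
        linarith
      calc ∑' n : ℕ, f (n + K) ≤ b^2 / K := tail K hK1
        _ ≤ 2 * (a * b) := by
            have hb2 : b ≤ 2*K*a := by rw [div_le_iff₀ ha] at h2K; linarith
            rw [div_le_iff₀ hKR]
            nlinarith [mul_le_mul_of_nonneg_left hb2 hb.le]
    calc ∑' n, f n = ∑ i ∈ range K, f i + ∑' n, f (n + K) := hsplit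
      _ ≤ a * b + 2 * (a * b) := add_le_add hhead htail
      _ = 3 * (a * b) := by ring





lemma min_sum_nat_summable (a b : ℝ) :
    Summable (fun n : ℕ => min (a^2) (b^2 / ((n:ℝ)+1)^2)) := by
  have := (Real.summable_one_div_nat_pow (p := 2)).mpr one_lt_two
  have h2 := (summable_nat_add_iff (f := fun n : ℕ => (1:ℝ) / (n:ℝ)^2) 1).mpr this
  have hmaj : Summable (fun n : ℕ => b^2 * (1 / ((n:ℝ)+1)^2)) :=
    (h2.congr (fun n => by push_cast; ring_nf)).mul_left _
  refine Summable.of_nonneg_of_le (fun n => ?_) (fun n => ?_) hmaj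
  · positivity
  · rw [mul_one_div]; exact min_le_right _ _

lemma min_sum_int_summable (a b : ℝ) :
    Summable (fun h : ℤ => if h = 0 then (0:ℝ) else min (a^2) (b^2 / (h:ℝ)^2)) := by
  set F : ℤ → ℝ := fun h => if h = 0 then (0:ℝ) else min (a^2) (b^2 / (h:ℝ)^2) with hF
  have hpos : ∀ n : ℕ, F ((n:ℤ)+1) = min (a^2) (b^2 / ((n:ℝ)+1)^2) := by
    intro n
    have : ((n:ℤ)+1) ≠ 0 := by positivity
    simp only [hF, if_neg this]
    norm_num
  have hneg : ∀ n : ℕ, F (-((n:ℤ)+1)) = min (a^2) (b^2 / ((n:ℝ)+1)^2) := by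
    intro n
    have h1 : ((n:ℤ)+1) ≠ 0 := by positivity
    have : -((n:ℤ)+1) ≠ 0 := neg_ne_zero.mpr h1
    simp only [hF, if_neg this]
    push_cast
    ring_nf
  have h2 : Summable (fun n : ℕ => F (-((n:ℤ)+1))) := by
    refine (min_sum_nat_summable a b).congr fun n => ?_
    rw [hneg]
  have h1 : Summable (fun n : ℕ => F ((n:ℤ))) := by
    rw [← summable_nat_add_iff 1]
    refine (min_sum_nat_summable a b).congr fun n => ?_
    rw [show ((n+1 : ℕ):ℤ) = (n:ℤ)+1 by push_cast; ring, hpos]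
  exact Summable.of_nat_of_neg_add_one h1 h2

lemma min_sum_int (a b : ℝ) (ha : 0 < a) (hb : 0 < b) :
    ∑' h : ℤ, (if h = 0 then (0:ℝ) else min (a^2) (b^2 / (h:ℝ)^2)) ≤ 6 * (a * b) := by
  set F : ℤ → ℝ := fun h => if h = 0 then (0:ℝ) else min (a^2) (b^2 / (h:ℝ)^2) with hF
  have hpos : ∀ n : ℕ, F ((n:ℤ)+1) = min (a^2) (b^2 / ((n:ℝ)+1)^2) := by
    intro n
    have : ((n:ℤ)+1) ≠ 0 := by positivity
    simp only [hF, if_neg this]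
    norm_num
  have hneg : ∀ n : ℕ, F (-((n:ℤ)+1)) = min (a^2) (b^2 / ((n:ℝ)+1)^2) := by
    intro n
    have h1 : ((n:ℤ)+1) ≠ 0 := by positivity
    have : -((n:ℤ)+1) ≠ 0 := neg_ne_zero.mpr h1
    simp only [hF, if_neg this]
    push_cast
    ring_nf
  have h2 : Summable (fun n : ℕ => F (-((n:ℤ)+1))) := by
    refine (min_sum_nat_summable a b).congr fun n => ?_
    rw [hneg]
  have h1 : Summable (fun n : ℕ => F ((n:ℤ))) := by
    rw [← summable_nat_add_iff 1]
    refine (min_sum_nat_summable a b).congr fun n => ?_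
    rw [show ((n+1 : ℕ):ℤ) = (n:ℤ)+1 by push_cast; ring, hpos]
  have key : ∑' h : ℤ, F h = (∑' n : ℕ, F ((n:ℤ))) + ∑' n : ℕ, F (-((n:ℤ)+1)) := by
    have := tsum_of_nat_of_neg_add_one h1 h2
    push_cast at this ⊢
    exact this
  rw [key]
  have e1 : ∑' n : ℕ, F ((n:ℤ)) ≤ 3 * (a * b) := by
    rw [Summable.tsum_eq_zero_add h1]
    have : F ((0:ℕ):ℤ) = 0 := by simp [hF]
    rw [this, zero_add]
    calc ∑' n : ℕ, F (((n+1:ℕ)):ℤ)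
        = ∑' n : ℕ, min (a^2) (b^2 / ((n:ℝ)+1)^2) := by
          refine tsum_congr fun n => ?_
          rw [show ((n+1 : ℕ):ℤ) = (n:ℤ)+1 by push_cast; ring, hpos]
      _ ≤ 3 * (a * b) := min_sum_nat a b ha hb
  have e2 : ∑' n : ℕ, F (-((n:ℤ)+1)) ≤ 3 * (a * b) := by
    calc ∑' n : ℕ, F (-((n:ℤ)+1))
        = ∑' n : ℕ, min (a^2) (b^2 / ((n:ℝ)+1)^2) := tsum_congr fun n => hneg n
      _ ≤ 3 * (a * b) := min_sum_nat a b ha hb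
  linarith



theorem gcd_sum_coefficient_bound :
    ∃ C : ℝ, 0 < C ∧ ∀ (s : ℝ) (N : ℕ), 0 < s → 2 ≤ N → 2 * s ≤ N →
      ∀ c : ℤ → ℝ,
        (∀ n : ℤ, n ≠ 0 → |c n| ≤ min (2 * s / N) (1 / |(n : ℝ)|)) →
        ∀ v w : ℤ, v ≠ 0 → w ≠ 0 →
          (∑' p : ℤ × ℤ,
              (if p.1 ≠ 0 ∧ p.2 ≠ 0 ∧ p.1 * v = p.2 * w
               then |c p.1 * c p.2| else 0)) ≤
            C * (1 + s) * Real.log N * (s / N) *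
              (Int.gcd v w : ℝ) / Real.sqrt |(v : ℝ) * w| := by
  refine ⟨18, by norm_num, ?_⟩
  intro s N hs hN hsN c hc v w hv hw
  have hNR : (0:ℝ) < N := by positivity
  have hN2 : (2:ℝ) ≤ N := by exact_mod_cast hN
  -- gcd decomposition
  set d : ℕ := Int.gcd v w with hd
  have hdpos : 0 < d := Int.gcd_pos_of_ne_zero_left w hv
  have hdz : (d:ℤ) ≠ 0 := by exact_mod_cast hdpos.ne'
  obtain ⟨v', hv'⟩ : (d:ℤ) ∣ v := Int.gcd_dvd_left v w
  obtain ⟨w', hw'⟩ : (d:ℤ) ∣ w := Int.gcd_dvd_right v w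
  have hv'0 : v' ≠ 0 := fun h => hv (by rw [hv', h, mul_zero])
  have hw'0 : w' ≠ 0 := fun h => hw (by rw [hw', h, mul_zero])
  have hco : Int.gcd w' v' = 1 := by
    have h1 : Int.gcd (v / (d:ℤ)) (w / (d:ℤ)) = 1 :=
      Int.gcd_div_gcd_div_gcd (by exact_mod_cast hdpos)
    have hvd : v / (d:ℤ) = v' := by rw [hv', Int.mul_ediv_cancel_left _ hdz]
    have hwd : w / (d:ℤ) = w' := by rw [hw', Int.mul_ediv_cancel_left _ hdz]
    rw [hvd, hwd] at h1
    rw [Int.gcd_comm]; exact h1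
  -- the real quantities
  set a : ℝ := 2 * s / N with hadef
  set b : ℝ := (d:ℝ) / Real.sqrt |(v:ℝ) * w| with hbdef
  have hvwpos : (0:ℝ) < |(v:ℝ) * w| := by
    exact abs_pos.mpr (mul_ne_zero (Int.cast_ne_zero.mpr hv) (Int.cast_ne_zero.mpr hw))
  have ha : 0 < a := by positivity
  have hb : 0 < b := by positivity
  have hb2 : b^2 = 1 / (|(v':ℝ)| * |(w':ℝ)|) := by
    have hvw' : |(v:ℝ) * w| = (d:ℝ)^2 * (|(v':ℝ)| * |(w':ℝ)|) := by
      have : ((v:ℝ) * w) = ((d:ℝ) * v') * ((d:ℝ) * w') := by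
        have h1 : (v:ℝ) = (d:ℝ) * (v':ℝ) := by exact_mod_cast congrArg Int.cast hv'
        have h2 : (w:ℝ) = (d:ℝ) * (w':ℝ) := by exact_mod_cast congrArg Int.cast hw'
        rw [h1, h2]
      rw [this, abs_mul, abs_mul, abs_mul]
      have : |(d:ℝ)| = (d:ℝ) := abs_of_nonneg (by positivity)
      rw [this]; ring
    rw [hbdef, div_pow, Real.sq_sqrt (abs_nonneg _), hvw']
    have hdR : (0:ℝ) < (d:ℝ) := by exact_mod_cast hdpos
    have h1 : (0:ℝ) < |(v':ℝ)| := abs_pos.mpr (by exact_mod_cast hv'0)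
    have h2 : (0:ℝ) < |(w':ℝ)| := abs_pos.mpr (by exact_mod_cast hw'0)
    field_simp
  -- the comparison function on ℤ
  set F : ℤ → ℝ := fun h => if h = 0 then (0:ℝ) else min (a^2) (b^2 / (h:ℝ)^2) with hF
  have hFnn : ∀ h, 0 ≤ F h := by
    intro h
    by_cases h0 : h = 0
    · simp [hF, h0]
    · simp only [hF, if_neg h0]
      have : (0:ℝ) < (h:ℝ)^2 := by
        have : (h:ℝ) ≠ 0 := by exact_mod_cast h0
        positivity
      exact le_min (by positivity) (by positivity)
  -- main inequality via injection
  set f : ℤ × ℤ → ℝ := fun p =>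
    if p.1 ≠ 0 ∧ p.2 ≠ 0 ∧ p.1 * v = p.2 * w then |c p.1 * c p.2| else 0 with hfdef
  have hRHSnn : 0 ≤ 18 * (1 + s) * Real.log N * (s / N) * (d:ℝ) / Real.sqrt |(v:ℝ) * w| := by
    have hlog : 0 ≤ Real.log N := Real.log_nonneg (by linarith)
    have h1 : (0:ℝ) ≤ 18 * (1 + s) := by nlinarith
    have : (0:ℝ) ≤ 18 * (1 + s) * Real.log N * (s / N) * (d:ℝ) := by positivity
    positivity
  by_cases hsum : Summable f
  · -- set S and rewrite as subtype sum
    set S : Set (ℤ × ℤ) := {p | p.1 ≠ 0 ∧ p.2 ≠ 0 ∧ p.1 * v = p.2 * w} with hS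
    have hind : f = S.indicator (fun p => |c p.1 * c p.2|) := by
      funext p
      simp only [hfdef, Set.indicator_apply, hS, Set.mem_setOf_eq]
    -- structure of elements of S
    have hstruct : ∀ p : ℤ × ℤ, p ∈ S →
        p.1 = w' * (p.1 / w') ∧ p.2 = v' * (p.1 / w') ∧ p.1 / w' ≠ 0 := by
      rintro p ⟨h1, h2, heq⟩
      have heq' : p.1 * v' = p.2 * w' := by
        apply mul_left_cancel₀ hdz
        have : p.1 * ((d:ℤ) * v') = p.2 * ((d:ℤ) * w') := by rw [← hv', ← hw']; exact heq
        linarith [this]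
      have hdvd : w' ∣ p.1 := by
        have hd2 : w' ∣ v' * p.1 := ⟨p.2, by linarith [heq']⟩
        exact Int.dvd_of_dvd_mul_right_of_gcd_one hd2 hco
      have e1 : p.1 = w' * (p.1 / w') := (Int.mul_ediv_cancel' hdvd).symm
      refine ⟨e1, ?_, ?_⟩
      · apply mul_left_cancel₀ hw'0
        have : (w' * (p.1 / w')) * v' = p.2 * w' := by rw [← e1]; exact heq'
        linarith [this]
      · intro h0
        exact h1 (by rw [e1, h0, mul_zero])
    -- the injection
    have key : (∑' q : S, |c (q:ℤ×ℤ).1 * c (q:ℤ×ℤ).2|) ≤ ∑' h : ℤ, F h := by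
      refine Summable.tsum_le_tsum_of_inj (fun q : S => (q:ℤ×ℤ).1 / w')
        (fun q q' hqq' => ?_) (fun h _ => hFnn h) (fun q => ?_) ?_ (min_sum_int_summable a b)
      · obtain ⟨e1, e2, _⟩ := hstruct q q.2
        obtain ⟨e1', e2', _⟩ := hstruct q' q'.2
        have hqq : (q:ℤ×ℤ).1 / w' = (q':ℤ×ℤ).1 / w' := hqq'
        have hx : (q:ℤ×ℤ).1 = (q':ℤ×ℤ).1 := by rw [e1, e1', hqq]
        have hy : (q:ℤ×ℤ).2 = (q':ℤ×ℤ).2 := by rw [e2, e2', hqq]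
        exact Subtype.ext (Prod.ext hx hy)
      · -- pointwise bound
        obtain ⟨e1, e2, e3⟩ := hstruct q q.2
        obtain ⟨h1, h2, heq⟩ := q.2
        set h : ℤ := (q:ℤ×ℤ).1 / w' with hh
        have hc1 := hc _ h1
        have hc2 := hc _ h2
        have habs : |c (q:ℤ×ℤ).1 * c (q:ℤ×ℤ).2| = |c (q:ℤ×ℤ).1| * |c (q:ℤ×ℤ).2| := abs_mul _ _
        have hFh : F h = min (a^2) (b^2 / (h:ℝ)^2) := if_neg e3
        rw [habs, hFh]
        have hbig : |c (q:ℤ×ℤ).1| * |c (q:ℤ×ℤ).2| ≤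
            min (a * a) ((1 / |((q:ℤ×ℤ).1 : ℝ)|) * (1 / |((q:ℤ×ℤ).2 : ℝ)|)) := by
          refine le_min ?_ ?_
          · exact mul_le_mul ((hc1.trans (min_le_left _ _)))
              ((hc2.trans (min_le_left _ _))) (abs_nonneg _) ha.le
          · exact mul_le_mul ((hc1.trans (min_le_right _ _)))
              ((hc2.trans (min_le_right _ _))) (abs_nonneg _) (by positivity)
        refine hbig.trans (le_min ?_ ?_)
        · exact (min_le_left _ _).trans_eq (sq a).symm
        · refine (min_le_right _ _).trans_eq ?_
          have hq1 : ((q:ℤ×ℤ).1 : ℝ) = (w':ℝ) * (h:ℝ) := by exact_mod_cast congrArg Int.cast e1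
          have hq2 : ((q:ℤ×ℤ).2 : ℝ) = (v':ℝ) * (h:ℝ) := by exact_mod_cast congrArg Int.cast e2
          have hhR : |(h:ℝ)| ≠ 0 := by
            have : (h:ℝ) ≠ 0 := by exact_mod_cast e3
            exact abs_ne_zero.mpr this
          have hv'R : |(v':ℝ)| ≠ 0 := abs_ne_zero.mpr (by exact_mod_cast hv'0)
          have hw'R : |(w':ℝ)| ≠ 0 := abs_ne_zero.mpr (by exact_mod_cast hw'0)
          rw [hq1, hq2, abs_mul, abs_mul, hb2, ← sq_abs (h:ℝ)]
          field_simp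
      · -- summability of the subtype family
        have hs1 : Summable (S.indicator (fun p : ℤ×ℤ => |c p.1 * c p.2|) ∘ ((↑) : S → ℤ×ℤ)) :=
          (hind ▸ hsum).subtype S
        refine hs1.congr fun q => ?_
        simp only [Function.comp_apply, Set.indicator_apply, if_pos q.2]
    have lhs_eq : (∑' p : ℤ×ℤ, f p) = ∑' q : S, |c (q:ℤ×ℤ).1 * c (q:ℤ×ℤ).2| := by
      rw [hind]
      exact (_root_.tsum_subtype S (fun p => |c p.1 * c p.2|)).symm
    have hfinal : (∑' p : ℤ×ℤ, f p) ≤ 6 * (a * b) :=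
      lhs_eq ▸ (key.trans (min_sum_int a b ha hb))
    -- arithmetic finish
    have harith : 6 * (a * b) ≤ 18 * (1 + s) * Real.log N * (s / N) * (d:ℝ) / Real.sqrt |(v:ℝ) * w| := by
      have hlog2 : Real.log 2 ≤ Real.log N := Real.log_le_log (by norm_num) hN2
      have hlogN : (0.6931471803 : ℝ) < Real.log N := lt_of_lt_of_le Real.log_two_gt_d9 hlog2
      have hrhs : 18 * (1 + s) * Real.log N * (s / N) * (d:ℝ) / Real.sqrt |(v:ℝ) * w|
          = (18 * (1 + s) * Real.log N * (s / N)) * b := by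
        rw [hbdef]; ring
      have hlhs : 6 * (a * b) = (12 * (s / N)) * b := by rw [hadef]; ring
      rw [hrhs, hlhs]
      refine mul_le_mul_of_nonneg_right ?_ hb.le
      have h1 : (1:ℝ) ≤ 1 + s := by linarith
      have h2 : (1:ℝ) * 0.6931471803 ≤ (1 + s) * Real.log N :=
        mul_le_mul h1 hlogN.le (by norm_num) (by linarith)
      have hsN' : 0 < s / N := div_pos hs hNR
      nlinarith [h2, hsN']
    exact hfinal.trans harith
  · rw [hfdef] at hsum
    rw [tsum_eq_zero_of_not_summable hsum]
    exact hRHSnn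
end

section
/- Let s > 0, N ≥ 2, m ≥ 1, and let c_n (n ≠ 0) be real numbers with |c_n| ≤ min(2s/N, 1/|n|). Then for all nonzero integers v, w: Σ |c_{n_1} c_{n_2}| ≪ 2^{-m} · gcd(v,w)/√(|vw|), where the sum is over pairs (n_1, n_2) with (2^m - 1)N < |n_1|, |n_2| ≤ (2^{m+1} - 1)N and n_1 v = n_2 w, with implied constant depending only on s. -/
/-!
A pair with n₁ v = n₂ w is (h · w/g, h · v/g) for an integer h, where g = gcd(v, w).
Hence the pairs with |n₁|, |n₂| ≤ B number at most 2Bg/|w| (count n₁) and at most 2Bg/|v|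
(count n₂), so at most 2Bg/√|vw|. Each term is at most 1/A², where A = (2^m - 1)N < |nᵢ|, and
2B/A² ≤ 8 · 2^{-m} for B = (2^{m+1} - 1)N.
-/

open Finset

namespace Int

lemma card_filter_ne_zero_dvd_Icc_le {B : ℤ} (hB : 0 ≤ B) {d : ℤ} (hd : d ≠ 0) :
    (#{n ∈ Icc (-B) B | n ≠ 0 ∧ d ∣ n} : ℝ) ≤ 2 * B / |(d : ℝ)| := by
  set S : Finset ℤ := {n ∈ Icc (-B) B | n ≠ 0 ∧ d ∣ n}
  have hd' : 0 < |d| := abs_pos.2 hd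
  set K := B / |d|
  have hmaps : Set.MapsTo (· / d) S ((Icc (-K) K).erase 0) := by
    intro _ hn
    simp only [S, coe_filter, Set.mem_ofPred_eq, mem_Icc] at hn
    obtain ⟨⟨hlo, hhi⟩, hn0, k, rfl⟩ := hn
    have hk : |k| ≤ K := (Int.le_ediv_iff_mul_le hd').2 <| by
      rw [← abs_mul, mul_comm]; exact abs_le.2 ⟨hlo, hhi⟩
    simp only [coe_erase, coe_Icc, Set.mem_sdiff, Set.mem_Icc, Set.mem_singleton_iff,
      Int.mul_ediv_cancel_left k hd]
    exact ⟨abs_le.1 hk, by rintro rfl; simp at hn0⟩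
  have hinj : Set.InjOn (· / d) S := by
    intro n hn n' hn' h
    simp only [S, coe_filter, Set.mem_ofPred_eq] at hn hn'
    exact (Int.ediv_left_inj hn.2.2 hn'.2.2).1 h
  have hcard : (#((Icc (-K) K).erase 0) : ℤ) = 2 * K := by
    have hK : 0 ≤ K := Int.ediv_nonneg hB hd'.le
    rw [card_erase_of_mem (by simp [hK]), Int.card_Icc]
    omega
  have hKd : (K : ℝ) * |(d : ℝ)| ≤ B := by exact_mod_cast Int.ediv_mul_le B hd'.ne'
  rw [le_div_iff₀ (by exact_mod_cast hd')]
  calc (#S : ℝ) * |(d : ℝ)| ≤ #((Icc (-K) K).erase 0) * |(d : ℝ)| := by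
        gcongr ?_ * _; exact_mod_cast card_le_card_of_injOn _ hmaps hinj
    _ = 2 * (K * |(d : ℝ)|) := by rw [← Int.cast_natCast, hcard]; push_cast; ring
    _ ≤ 2 * B := by gcongr

lemma div_gcd_dvd_of_mul_eq_mul {a b v w : ℤ} (hv : v ≠ 0) (h : a * v = b * w) :
    w / gcd v w ∣ a := by
  have hg : 0 < gcd v w := Int.gcd_pos_of_ne_zero_left w hv
  have hcop : IsCoprime (w / gcd v w) (v / gcd v w) := by
    rw [Int.isCoprime_iff_gcd_eq_one, Int.gcd_comm]; exact Int.gcd_ediv_gcd_ediv_gcd hg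
  refine hcop.dvd_of_dvd_mul_right ⟨b, ?_⟩
  rw [← Int.mul_ediv_assoc _ (Int.gcd_dvd_left v w), h, mul_comm b,
    Int.mul_ediv_assoc' _ (Int.gcd_dvd_right v w)]

end Int

lemma card_le_gcd_div_abs_of_mul_eq_mul {S : Finset (ℤ × ℤ)} {B v w : ℤ} (hB : 0 ≤ B)
    (hv : v ≠ 0) (hw : w ≠ 0) (hS : ∀ p ∈ S, p.1 ≠ 0 ∧ |p.1| ≤ B ∧ p.1 * v = p.2 * w) :
    (#S : ℝ) ≤ 2 * B * Int.gcd v w / |(w : ℝ)| := by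
  have hinj : Set.InjOn Prod.fst (S : Set (ℤ × ℤ)) := by
    intro p hp p' hp' h
    refine Prod.ext h (mul_right_cancel₀ hw ?_)
    rw [← (hS p hp).2.2, ← (hS p' hp').2.2, h]
  have hsub : S.image Prod.fst ⊆ {n ∈ Icc (-B) B | n ≠ 0 ∧ w / Int.gcd v w ∣ n} := by
    intro n hn
    obtain ⟨p, hp, rfl⟩ := mem_image.1 hn
    obtain ⟨hp0, hpB, hpvw⟩ := hS p hp
    exact mem_filter.2
      ⟨mem_Icc.2 (abs_le.1 hpB), hp0, Int.div_gcd_dvd_of_mul_eq_mul hv hpvw⟩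
  have hg : (Int.gcd v w : ℝ) ≠ 0 := by
    exact_mod_cast (Int.gcd_pos_of_ne_zero_left w hv).ne'
  have hwg : w / Int.gcd v w ≠ 0 := fun h ↦ hw <| by
    rw [← Int.ediv_mul_cancel (Int.gcd_dvd_right v w), h, zero_mul]
  calc (#S : ℝ) = #(S.image Prod.fst) := by rw [card_image_of_injOn hinj]
    _ ≤ #{n ∈ Icc (-B) B | n ≠ 0 ∧ w / Int.gcd v w ∣ n} := by gcongr
    _ ≤ 2 * B / |((w / Int.gcd v w : ℤ) : ℝ)| := Int.card_filter_ne_zero_dvd_Icc_le hB hwg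
    _ = 2 * B * Int.gcd v w / |(w : ℝ)| := by
        rw [Int.cast_div (Int.gcd_dvd_right v w) (by exact_mod_cast hg), abs_div]
        push_cast
        rw [Nat.abs_cast]
        field_simp

lemma le_div_sqrt_mul_of_le_div {x a p q : ℝ} (hx : 0 ≤ x) (hp : 0 < p) (hq : 0 < q)
    (hxp : x ≤ a / p) (hxq : x ≤ a / q) : x ≤ a / √(p * q) := by
  rw [le_div_iff₀ hp] at hxp
  rw [le_div_iff₀ hq] at hxq
  have ha : 0 ≤ a := (mul_nonneg hx hp.le).trans hxp
  rw [le_div_iff₀ (Real.sqrt_pos.2 (mul_pos hp hq))]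
  calc x * √(p * q) = √((x * p) * (x * q)) := by
        rw [show x * p * (x * q) = x ^ 2 * (p * q) by ring, Real.sqrt_mul (sq_nonneg x),
          Real.sqrt_sq hx]
    _ ≤ √(a * a) := Real.sqrt_le_sqrt (mul_le_mul hxp hxq (by positivity) ha)
    _ = a := Real.sqrt_mul_self ha

lemma card_le_gcd_div_sqrt_of_mul_eq_mul {S : Finset (ℤ × ℤ)} {B v w : ℤ} (hB : 0 ≤ B)
    (hv : v ≠ 0) (hw : w ≠ 0)
    (hS : ∀ p ∈ S, p.1 ≠ 0 ∧ p.2 ≠ 0 ∧ |p.1| ≤ B ∧ |p.2| ≤ B ∧ p.1 * v = p.2 * w) :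
    (#S : ℝ) ≤ 2 * B * Int.gcd v w / √|(v : ℝ) * w| := by
  have hfst : (#S : ℝ) ≤ 2 * B * Int.gcd v w / |(w : ℝ)| :=
    card_le_gcd_div_abs_of_mul_eq_mul hB hv hw fun p hp ↦
      ⟨(hS p hp).1, (hS p hp).2.2.1, (hS p hp).2.2.2.2⟩
  have hsnd : (#S : ℝ) ≤ 2 * B * Int.gcd v w / |(v : ℝ)| := by
    rw [← card_image_of_injective S Prod.swap_injective, Int.gcd_comm]
    refine card_le_gcd_div_abs_of_mul_eq_mul hB hw hv fun _ hq ↦ ?_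
    obtain ⟨p, hp, rfl⟩ := mem_image.1 hq
    obtain ⟨-, hp2, -, hpB, hpvw⟩ := hS p hp
    exact ⟨hp2, hpB, hpvw.symm⟩
  rw [abs_mul, mul_comm |(v : ℝ)|]
  exact le_div_sqrt_mul_of_le_div (Nat.cast_nonneg _) (by positivity) (by positivity)
    hfst hsnd

lemma abs_mul_le_one_div_sq {c : ℤ → ℝ} (hc : ∀ n : ℤ, n ≠ 0 → |c n| ≤ 1 / |(n : ℝ)|)
    {A a b : ℤ} (hA : 0 < A) (ha : A < |a|) (hb : A < |b|) :
    |c a * c b| ≤ 1 / (A : ℝ) ^ 2 := by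
  have hA' : (0 : ℝ) < A := by exact_mod_cast hA
  have habs_le : ∀ n : ℤ, A < |n| → |c n| ≤ 1 / A := fun n hn ↦
    (hc n (by rintro rfl; simp at hn; omega)).trans <|
      one_div_le_one_div_of_le hA' (by rw [← Int.cast_abs]; exact_mod_cast hn.le)
  calc |c a * c b| = |c a| * |c b| := abs_mul _ _
    _ ≤ 1 / A * (1 / A) := mul_le_mul (habs_le a ha) (habs_le b hb) (abs_nonneg _) (by positivity)
    _ = 1 / (A : ℝ) ^ 2 := by ring

theorem tsum_abs_mul_le_of_mul_eq_mul {c : ℤ → ℝ}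
    (hc : ∀ n : ℤ, n ≠ 0 → |c n| ≤ 1 / |(n : ℝ)|) {A B v w : ℤ} (hA : 0 < A) (hB : 0 ≤ B)
    (hv : v ≠ 0) (hw : w ≠ 0) :
    ∑' p : ℤ × ℤ, (if A < |p.1| ∧ |p.1| ≤ B ∧ A < |p.2| ∧ |p.2| ≤ B ∧ p.1 * v = p.2 * w
        then |c p.1 * c p.2| else 0) ≤
      2 * B * Int.gcd v w / √|(v : ℝ) * w| / (A : ℝ) ^ 2 := by
  set S := {p ∈ Icc (-B) B ×ˢ Icc (-B) B |
    A < |p.1| ∧ |p.1| ≤ B ∧ A < |p.2| ∧ |p.2| ≤ B ∧ p.1 * v = p.2 * w}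
  have hsupp : ∀ p ∉ Icc (-B) B ×ˢ Icc (-B) B, (if A < |p.1| ∧ |p.1| ≤ B ∧ A < |p.2| ∧
      |p.2| ≤ B ∧ p.1 * v = p.2 * w then |c p.1 * c p.2| else 0) = 0 := by
    intro p hp
    refine if_neg fun ⟨_, h1, _, h2, _⟩ ↦ hp ?_
    exact mem_product.2 ⟨mem_Icc.2 (abs_le.1 h1), mem_Icc.2 (abs_le.1 h2)⟩
  have hpos : ∀ {n : ℤ}, A < |n| → n ≠ 0 := by rintro n hn rfl; simp at hn; omega
  have hcard : (#S : ℝ) ≤ 2 * B * Int.gcd v w / √|(v : ℝ) * w| :=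
    card_le_gcd_div_sqrt_of_mul_eq_mul hB hv hw fun p hp ↦ by
      obtain ⟨-, h1, hB1, h2, hB2, hvw⟩ := mem_filter.1 hp
      exact ⟨hpos h1, hpos h2, hB1, hB2, hvw⟩
  rw [tsum_eq_sum hsupp, ← sum_filter]
  calc ∑ p ∈ S, |c p.1 * c p.2| ≤ #S • (1 / (A : ℝ) ^ 2) :=
        sum_le_card_nsmul _ _ _ fun p hp ↦ by
          obtain ⟨-, h1, -, h2, -⟩ := mem_filter.1 hp
          exact abs_mul_le_one_div_sq hc hA h1 h2
    _ ≤ 2 * B * Int.gcd v w / √|(v : ℝ) * w| * (1 / (A : ℝ) ^ 2) := by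
        rw [nsmul_eq_mul]; gcongr
    _ = 2 * B * Int.gcd v w / √|(v : ℝ) * w| / (A : ℝ) ^ 2 := by ring

lemma dyadic_ratio_le {x N : ℝ} (hx : 2 ≤ x) (hN : 2 ≤ N) :
    2 * ((2 * x - 1) * N) / ((x - 1) * N) ^ 2 ≤ 8 / x := by
  have hxN : 0 < (x - 1) * N := mul_pos (by linarith) (by linarith)
  rw [div_le_div_iff₀ (by positivity) (by linarith)]
  nlinarith [mul_nonneg (sub_nonneg.2 hx) (sub_nonneg.2 hN),
    mul_nonneg (sub_nonneg.2 hN) (sq_nonneg (x - 2)), sq_nonneg (x - 2)]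

theorem gcd_sum_dyadic_coefficient_bound_general (s : ℝ) :
    ∃ C : ℝ, 0 < C ∧ ∀ (N : ℕ), 2 ≤ N → ∀ (m : ℕ), 1 ≤ m →
      ∀ c : ℤ → ℝ,
        (∀ n : ℤ, n ≠ 0 → |c n| ≤ min (2 * s / N) (1 / |(n : ℝ)|)) →
        ∀ v w : ℤ, v ≠ 0 → w ≠ 0 →
          (∑' p : ℤ × ℤ,
              (if (2 ^ m - 1) * (N : ℤ) < |p.1| ∧ |p.1| ≤ (2 ^ (m + 1) - 1) * N ∧
                  (2 ^ m - 1) * (N : ℤ) < |p.2| ∧ |p.2| ≤ (2 ^ (m + 1) - 1) * N ∧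
                  p.1 * v = p.2 * w
               then |c p.1 * c p.2| else 0)) ≤
            C * (2 : ℝ) ^ (-(m : ℝ)) * (Int.gcd v w : ℝ) / Real.sqrt |(v : ℝ) * w| := by
  refine ⟨8, by norm_num, fun N hN m hm c hc v w hv hw ↦ ?_⟩
  have hA : 0 < (2 ^ m - 1) * (N : ℤ) :=
    mul_pos (sub_pos.2 (one_lt_pow₀ one_lt_two (by omega))) (by omega)
  have hB : 0 ≤ (2 ^ (m + 1) - 1) * (N : ℤ) :=
    mul_nonneg (sub_nonneg.2 (one_le_pow₀ one_le_two)) (Nat.cast_nonneg N)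
  refine (tsum_abs_mul_le_of_mul_eq_mul (fun n hn ↦ (hc n hn).trans (min_le_right _ _))
    hA hB hv hw).trans ?_
  have hx : (2 : ℝ) ≤ 2 ^ m := le_self_pow₀ one_le_two (by omega)
  have hN' : (2 : ℝ) ≤ N := by exact_mod_cast hN
  set G := (Int.gcd v w : ℝ) / √|(v : ℝ) * w|
  calc _ = 2 * ((2 * 2 ^ m - 1) * N) / ((2 ^ m - 1) * N) ^ 2 * G := by push_cast; ring
    _ ≤ 8 / 2 ^ m * G := by gcongr ?_ * G; exact dyadic_ratio_le hx hN'
    _ = _ := by rw [Real.rpow_neg zero_le_two, Real.rpow_natCast]; ring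

theorem gcd_sum_dyadic_coefficient_bound (s : ℝ) (hs : 0 < s) :
    ∃ C : ℝ, 0 < C ∧ ∀ (N : ℕ), 2 ≤ N → ∀ (m : ℕ), 1 ≤ m →
      ∀ c : ℤ → ℝ,
        (∀ n : ℤ, n ≠ 0 → |c n| ≤ min (2 * s / N) (1 / |(n : ℝ)|)) →
        ∀ v w : ℤ, v ≠ 0 → w ≠ 0 →
          (∑' p : ℤ × ℤ,
              (if (2 ^ m - 1) * (N : ℤ) < |p.1| ∧ |p.1| ≤ (2 ^ (m + 1) - 1) * N ∧
                  (2 ^ m - 1) * (N : ℤ) < |p.2| ∧ |p.2| ≤ (2 ^ (m + 1) - 1) * N ∧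
                  p.1 * v = p.2 * w
               then |c p.1 * c p.2| else 0)) ≤
            C * (2 : ℝ) ^ (-(m : ℝ)) * (Int.gcd v w : ℝ) / Real.sqrt |(v : ℝ) * w| :=
  gcd_sum_dyadic_coefficient_bound_general s
end
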